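/- Let H = (N, {≻_a}) be a housing market with strict partial order preferences, X an allocation, and define prices p : N → {1,…,n} (n = |N|). X is in the strong core of H if and only if there exists such a price function p with p(i) < p(j) for every arc (i,j) ∈ E_{[≻X]} and p(i) ≤ p(j) for every arc (i,j) ∈ E_{[⪰X]}. -/

import Mathlib

/-- A housing market: each agent `a` has a strict partial order `pref a`
(`pref a b c` means agent `a` strictly prefers house `b` to house `c`). -/
structure Market (N : Type) where
  pref : N → N → N → Prop
  irrefl : ∀ a b, ¬ pref a b b
  asymm : ∀ a b c, pref a b c → ¬ pref a c b
  trans : ∀ a b c d, pref a b c → pref a c d → pref a b d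

namespace Market

variable {N : Type}

/-- `b` is acceptable to `a`: `b ⪰_a a`, i.e. not `a ≻_a b`. -/
def acceptable (H : Market N) (a b : N) : Prop := ¬ H.pref a a b

/-- Arcs of the underlying digraph `D^H`. -/
def E (H : Market N) : Set (N × N) := {e | H.acceptable e.1 e.2}

/-- Undominated arcs of `D^H`. -/
def undominated (H : Market N) : Set (N × N) :=
  {e | e ∈ H.E ∧ ∀ b', H.acceptable e.1 b' → ¬ H.pref e.1 b' e.2}

/-- A full allocation, given as a function assigning each agent its house. -/
def IsAllocation (H : Market N) (X : N → N) : Prop :=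
  Function.Bijective X ∧ ∀ a, H.acceptable a (X a)

/-- A cycle of length `k ≥ 1` with all arcs in the arc set `A`. -/
def IsCycleIn (A : Set (N × N)) (k : ℕ) (c : ZMod k → N) : Prop :=
  0 < k ∧ Function.Injective c ∧ ∀ i, (c i, c (i + 1)) ∈ A

/-- `E_{[⪰X]}`: arcs `(a,b)` with `b ⪰_a X(a)`. -/
def weakImprove (H : Market N) (X : N → N) : Set (N × N) :=
  {e | e ∈ H.E ∧ ¬ H.pref e.1 (X e.1) e.2}

/-- `E_{[≻X]}`: arcs `(a,b)` with `b ≻_a X(a)`. -/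
def strictImprove (H : Market N) (X : N → N) : Set (N × N) :=
  {e | e ∈ H.E ∧ H.pref e.1 e.2 (X e.1)}

/-- A (weakly) blocking cycle for `X`. -/
def Blocks (H : Market N) (X : N → N) (k : ℕ) (c : ZMod k → N) : Prop :=
  IsCycleIn H.E k c ∧
  (∀ i, ¬ H.pref (c i) (X (c i)) (c (i + 1))) ∧
  (∃ i, H.pref (c i) (c (i + 1)) (X (c i)))

/-- The strong core: allocations admitting no blocking cycle. -/
def InStrongCore (H : Market N) (X : N → N) : Prop :=
  H.IsAllocation X ∧ ¬ ∃ k c, H.Blocks X k c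

/-- A strictly blocking cycle for `X`. -/
def StrictBlocks (H : Market N) (X : N → N) (k : ℕ) (c : ZMod k → N) : Prop :=
  IsCycleIn H.E k c ∧ ∀ i, H.pref (c i) (c (i + 1)) (X (c i))

/-- The core: allocations admitting no strictly blocking cycle. -/
def InCore (H : Market N) (X : N → N) : Prop :=
  H.IsAllocation X ∧ ¬ ∃ k c, H.StrictBlocks X k c

/-- An allocation of the submarket `H|_S`, given as a set of arcs among agents of `S`. -/
def IsAllocationOn (H : Market N) (S : Set N) (X : Set (N × N)) : Prop :=
  X ⊆ H.E ∧ (∀ e ∈ X, e.1 ∈ S ∧ e.2 ∈ S) ∧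
  (∀ a ∈ S, ∃! b, (a, b) ∈ X) ∧ (∀ b ∈ S, ∃! a, (a, b) ∈ X)

/-- A blocking cycle for the arc set `X` within the submarket `H|_S`. -/
def BlocksOn (H : Market N) (S : Set N) (X : Set (N × N)) (k : ℕ) (c : ZMod k → N) : Prop :=
  IsCycleIn H.E k c ∧ (∀ i, c i ∈ S) ∧
  (∀ i b, (c i, b) ∈ X → ¬ H.pref (c i) b (c (i + 1))) ∧
  (∃ i b, (c i, b) ∈ X ∧ H.pref (c i) (c (i + 1)) b)

/-- Membership in the strong core of the submarket `H|_S`. -/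
def InStrongCoreOn (H : Market N) (S : Set N) (X : Set (N × N)) : Prop :=
  H.IsAllocationOn S X ∧ ¬ ∃ k c, H.BlocksOn S X k c

end Market

/-- The arcs of the allocation `X` whose tails lie in `S`. -/
def graphRestrict {N : Type} (X : N → N) (S : Set N) : Set (N × N) :=
  {e | e.1 ∈ S ∧ e.2 = X e.1}

/-- Reachability in the digraph given by arc set `A`. -/
def reach {N : Type} (A : Set (N × N)) : N → N → Prop :=
  Relation.ReflTransGen (fun u v => (u, v) ∈ A)

/-- A strongly connected component of the digraph given by arc set `A`. -/
def IsSCC {N : Type} (A : Set (N × N)) (S : Set N) : Prop :=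
  S.Nonempty ∧ (∀ u ∈ S, ∀ v ∈ S, reach A u v) ∧
  (∀ u ∈ S, ∀ v, reach A u v → reach A v u → v ∈ S)

/-- An absorbing set: a strongly connected component not left by any arc. -/
def IsAbsorbing {N : Type} (A : Set (N × N)) (S : Set N) : Prop :=
  IsSCC A S ∧ ∀ e ∈ A, e.1 ∈ S → e.2 ∈ S

/-! If no arc `(a, b)` of `E_{[≻X]}` has `a` reachable from `b` in `E_{[⪰X]}` (which is what
excluding blocking cycles says), price each agent by the number of agents from which it is
reachable in `E_{[⪰X]}`: this count is weakly increasing along arcs of `E_{[⪰X]}` and strictly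
increasing along arcs that leave a strongly connected component. Conversely, prices that never
decrease around a cycle are constant on it, so no arc of the cycle can be strict. -/

theorem List.exists_nodup_isChain_cons_of_reflTransGen {α : Type*} {r : α → α → Prop} {a b : α}
    (h : Relation.ReflTransGen r a b) :
    ∃ l : List α, (a :: l).IsChain r ∧ (a :: l).getLast (cons_ne_nil a l) = b ∧ (a :: l).Nodup := by
  induction h using Relation.ReflTransGen.head_induction_on with
  | refl => exact ⟨[], .singleton b, rfl, nodup_singleton b⟩
  | @head a c hac _ ih =>
    obtain ⟨l, hchain, hlast, hnodup⟩ := ih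
    by_cases ha : a ∈ c :: l
    · obtain ⟨s, t, hst⟩ := append_of_mem ha
      rw [hst] at hchain hnodup
      refine ⟨t, hchain.suffix (suffix_append s _), ?_, hnodup.sublist (sublist_append_right s _)⟩
      simpa [hst, getLast_append_of_ne_nil] using hlast
    · exact ⟨c :: l, hchain.cons_cons hac, hlast, nodup_cons.2 ⟨ha, hnodup⟩⟩

theorem ZMod.le_of_forall_le_add_one {k : ℕ} [NeZero k] {α : Type*} [Preorder α]
    {f : ZMod k → α} (h : ∀ i, f i ≤ f (i + 1)) (i j : ZMod k) : f i ≤ f j := by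
  have hstep : ∀ m : ℕ, f i ≤ f (i + m) := by
    intro m
    induction m with
    | zero => simp
    | succ m ih => simpa [add_assoc] using ih.trans (h (i + m))
  simpa using hstep (j - i).val

section Digraph

variable {N : Type} {A : Set (N × N)}

theorem exists_isCycleIn_of_reach {a b : N} (hab : (a, b) ∈ A) (hba : reach A b a) :
    ∃ k c, Market.IsCycleIn A k c ∧ ∃ i, c i = a ∧ c (i + 1) = b := by
  obtain ⟨t, hchain, hend, hnodup⟩ := List.exists_nodup_isChain_cons_of_reflTransGen hba
  have hlast : (b :: t)[t.length] = a := by rw [← hend, List.getLast_eq_getElem]; rfl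
  let c : Fin (t.length + 1) → N := fun i => (b :: t)[(i : ℕ)]
  have hfirst : c (Fin.last _ + 1) = b := by simp [c]
  have hcycle : ∀ i, (c i, c (i + 1)) ∈ A := by
    intro i
    by_cases hi : i = Fin.last _
    · subst hi
      simpa [c, hlast] using hab
    · have hlt : i < Fin.last _ := Fin.lt_last_iff_ne_last.2 hi
      simpa only [c, Fin.val_add_one_of_lt hlt] using
        List.isChain_iff_getElem.1 hchain i (Nat.succ_lt_succ hlt)
  -- `ZMod (t.length + 1)` is `Fin (t.length + 1)` by definition
  exact ⟨t.length + 1, c, ⟨t.length.succ_pos, List.nodup_iff_injective_get.1 hnodup, hcycle⟩,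
    Fin.last _, hlast, hfirst⟩

noncomputable def ancestorCount (A : Set (N × N)) (v : N) : ℕ := {u | reach A u v}.ncard

theorem ancestorCount_pos [Finite N] (v : N) : 0 < ancestorCount A v :=
  (Set.ncard_pos (Set.toFinite _)).2 ⟨v, .refl⟩

theorem ancestorCount_le_card [Fintype N] (v : N) : ancestorCount A v ≤ Fintype.card N := by
  simpa [ancestorCount, ← Nat.card_eq_fintype_card] using Set.ncard_le_card {u | reach A u v}

theorem ancestorCount_le_of_mem [Finite N] {u v : N} (huv : (u, v) ∈ A) :
    ancestorCount A u ≤ ancestorCount A v :=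
  Set.ncard_le_ncard (fun _ hw => Relation.ReflTransGen.tail hw huv)

theorem ancestorCount_lt_of_mem [Finite N] {u v : N} (huv : (u, v) ∈ A) (hvu : ¬ reach A v u) :
    ancestorCount A u < ancestorCount A v :=
  Set.ncard_lt_ncard ⟨fun _ hw => Relation.ReflTransGen.tail hw huv, fun hsub => hvu (hsub .refl)⟩

end Digraph

namespace Market

variable {N : Type} (H : Market N) (X : N → N)

theorem strictImprove_subset_weakImprove : H.strictImprove X ⊆ H.weakImprove X :=
  fun _ he => ⟨he.1, H.asymm _ _ _ he.2⟩

theorem exists_blocks_of_reach {a b : N} (hab : (a, b) ∈ H.strictImprove X)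
    (hba : reach (H.weakImprove X) b a) : ∃ k c, H.Blocks X k c := by
  obtain ⟨k, c, ⟨hk, hinj, hweak⟩, i, rfl, hb⟩ :=
    exists_isCycleIn_of_reach (H.strictImprove_subset_weakImprove X hab) hba
  exact ⟨k, c, ⟨hk, hinj, fun j => (hweak j).1⟩, fun j => (hweak j).2, i, hb ▸ hab.2⟩

theorem not_exists_blocks_of_prices {α : Type*} [Preorder α] {p : N → α}
    (hstrict : ∀ e ∈ H.strictImprove X, p e.1 < p e.2)
    (hweak : ∀ e ∈ H.weakImprove X, p e.1 ≤ p e.2) : ¬ ∃ k c, H.Blocks X k c := by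
  rintro ⟨k, c, ⟨hk, -, hE⟩, hweakc, i, hi⟩
  have : NeZero k := ⟨hk.ne'⟩
  have hmono : ∀ j, p (c j) ≤ p (c (j + 1)) := fun j => hweak _ ⟨hE j, hweakc j⟩
  exact (hstrict _ ⟨hE i, hi⟩).not_ge (ZMod.le_of_forall_le_add_one (f := p ∘ c) hmono (i + 1) i)

end Market

theorem stmt13 {N : Type} [Fintype N] (H : Market N) (X : N → N)
    (hX : H.IsAllocation X) :
    H.InStrongCore X ↔
      ∃ p : N → ℕ, (∀ i, 1 ≤ p i ∧ p i ≤ Fintype.card N) ∧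
        (∀ e ∈ H.strictImprove X, p e.1 < p e.2) ∧
        (∀ e ∈ H.weakImprove X, p e.1 ≤ p e.2) := by
  constructor
  · rintro ⟨-, hcore⟩
    refine ⟨ancestorCount (H.weakImprove X),
      fun v => ⟨ancestorCount_pos v, ancestorCount_le_card v⟩, fun e he => ?_,
      fun e he => ancestorCount_le_of_mem he⟩
    exact ancestorCount_lt_of_mem (H.strictImprove_subset_weakImprove X he)
      fun hr => hcore (H.exists_blocks_of_reach X he hr)
  · rintro ⟨p, -, hstrict, hweak⟩
    exact ⟨hX, H.not_exists_blocks_of_prices X hstrict hweak⟩
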